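/- Let r be a real number with 0 < r < d. The following are equivalent: (1) A ∈ W'_{(n−d+r)/(d−r)}(d, n−d); (2) there exist R_i → 0, a sequence t_i → ∞ and nonzero vectors v_i ∈ ℤ^n such that ‖b_{d·t_i} g_A v_i‖ ≤ R_i e^{−r t_i} for all i; (3) there exist C_i → 0, a sequence t_i → ∞ and nonzero vectors v_i ∈ ℤ^n such that sup_{ω∈Ω} ‖g_{t_i} ω g_A v_i‖ ≤ C_i e^{(d−r−1)t_i} for all i. -/

import Mathlib

open Matrix MeasureTheory Filter Topology

noncomputable section

abbrev SLn (n : ℕ) := Matrix.SpecialLinearGroup (Fin n) ℝ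

instance SLn.topologicalSpace (n : ℕ) : TopologicalSpace (SLn n) :=
  TopologicalSpace.induced (fun g => (g : Matrix (Fin n) (Fin n) ℝ)) inferInstance

/-- The diagonal flow `g_t = diag(e^{(n-1)t}, e^{-t}, …, e^{-t})`. -/
def gtFlow (n : ℕ) (hn : 0 < n) (t : ℝ) : SLn n :=
  ⟨Matrix.diagonal (fun i => if (i : ℕ) = 0 then Real.exp ((n - 1 : ℝ) * t) else Real.exp (-t)),
    by
      rcases Nat.exists_eq_succ_of_ne_zero hn.ne' with ⟨m, rfl⟩
      rw [Matrix.det_diagonal, Fin.prod_univ_succ]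
      have h1 : ∀ i : Fin m,
          (if ((i.succ : Fin (m+1)) : ℕ) = 0 then Real.exp (((m.succ : ℝ) - 1) * t)
            else Real.exp (-t)) = Real.exp (-t) := by
        intro i; simp [Fin.val_succ]
      rw [Finset.prod_congr rfl (fun i _ => h1 i)]
      simp only [Fin.val_zero, if_true, Finset.prod_const, Finset.card_univ,
        Fintype.card_fin, if_true]
      rw [← Real.exp_nat_mul, ← Real.exp_add]
      have h2 : ((m.succ : ℝ) - 1) * t + (m : ℝ) * -t = 0 := by push_cast; ring
      rw [h2, Real.exp_zero]⟩

/-- The unipotent element `u(v)` whose first row is `(1, v)`. -/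
def uv (n : ℕ) (v : Fin (n - 1) → ℝ) : SLn n :=
  ⟨Matrix.of fun i j =>
      if i = j then 1
      else if hij : (i : ℕ) = 0 ∧ (j : ℕ) ≠ 0 then v ⟨(j : ℕ) - 1, by have := j.isLt; omega⟩
      else 0,
    by
      have h := Matrix.det_of_upperTriangular (M := Matrix.of fun i j : Fin n =>
        if i = j then (1:ℝ)
        else if hij : (i : ℕ) = 0 ∧ (j : ℕ) ≠ 0 then v ⟨(j : ℕ) - 1, by have := j.isLt; omega⟩
        else 0) ?_
      · rw [h]; simp
      · intro i j hji
        have hij : ¬ i = j := by exact fun h => absurd h (by exact Fin.ne_of_gt hji)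
        have : ¬ ((i : ℕ) = 0 ∧ (j : ℕ) ≠ 0) := by
          rintro ⟨hi, -⟩
          have : (j : ℕ) < (i : ℕ) := hji
          omega
        simp [hij, this]⟩

/-- The block matrix `(I_d  A ; 0  I_{n-d})` as an element of `SL_n(ℝ)`. -/
def gA (n d : ℕ) (A : Matrix (Fin d) (Fin (n - d)) ℝ) : SLn n :=
  ⟨Matrix.of fun i j =>
      if i = j then 1
      else if hij : (i : ℕ) < d ∧ d ≤ (j : ℕ) then
        A ⟨i, hij.1⟩ ⟨(j : ℕ) - d, by have := j.isLt; omega⟩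
      else 0,
    by
      have h := Matrix.det_of_upperTriangular (M := Matrix.of fun i j : Fin n =>
        if i = j then (1:ℝ)
        else if hij : (i : ℕ) < d ∧ d ≤ (j : ℕ) then
          A ⟨i, hij.1⟩ ⟨(j : ℕ) - d, by have := j.isLt; omega⟩
        else 0) ?_
      · rw [h]; simp
      · intro i j hji
        have hij : ¬ i = j := Fin.ne_of_gt hji
        have hlt : (j : ℕ) < (i : ℕ) := hji
        have : ¬ ((i : ℕ) < d ∧ d ≤ (j : ℕ)) := by omega
        simp [hij, this]⟩

/-- The flow `b_t = diag(e^{((n-d)/d)t} I_d, e^{-t} I_{n-d})`. -/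
def btFlow (n d : ℕ) (hd : 0 < d) (hdn : d ≤ n) (t : ℝ) : SLn n :=
  ⟨Matrix.diagonal (fun i =>
      if (i : ℕ) < d then Real.exp (((n : ℝ) - d) / d * t) else Real.exp (-t)),
    by
      rw [Matrix.det_diagonal]
      have key : ∀ i : Fin n,
          (if (i : ℕ) < d then Real.exp (((n : ℝ) - d) / d * t) else Real.exp (-t))
            = Real.exp (if (i : ℕ) < d then ((n : ℝ) - d) / d * t else -t) := by
        intro i; split <;> rfl
      rw [Finset.prod_congr rfl (fun i _ => key i), ← Real.exp_sum]
      have hsum : (∑ i : Fin n, if (i : ℕ) < d then ((n : ℝ) - d) / d * t else -t) = 0 := by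
        rw [Fin.sum_univ_eq_sum_range (fun i => if i < d then ((n : ℝ) - d) / d * t else -t) n]
        rw [Finset.range_eq_Ico, ← Finset.sum_Ico_consecutive _ (Nat.zero_le d) hdn]
        rw [Finset.sum_congr rfl (fun i hi => if_pos (Finset.mem_Ico.mp hi).2),
          Finset.sum_congr rfl (g := fun _ => -t)
            (fun i hi => if_neg (by have := (Finset.mem_Ico.mp hi).1; omega))]
        simp only [Finset.sum_const, Nat.card_Ico, nsmul_eq_mul, Nat.sub_zero]
        have hd' : (d : ℝ) ≠ 0 := Nat.cast_ne_zero.mpr hd.ne'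
        have hnd : ((n - d : ℕ) : ℝ) = (n : ℝ) - d := by
          push_cast [Nat.cast_sub hdn]; ring
        rw [hnd]
        field_simp
        ring
      rw [hsum, Real.exp_zero]⟩

/-- The vector `(1, x) ∈ ℝ^d` obtained by prepending `1` to `x ∈ ℝ^{d-1}`. -/
def tildeVec (d : ℕ) (x : Fin (d - 1) → ℝ) : Fin d → ℝ :=
  fun i => if h : (i : ℕ) = 0 then 1 else x ⟨(i : ℕ) - 1, by have := i.isLt; omega⟩

/-- The affine subspace `L_A = {(x, (1,x)A) : x ∈ ℝ^{d-1}}` of `ℝ^{n-1}`. -/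
def LAset (n d : ℕ) (hd : 2 ≤ d) (hdn : d ≤ n - 1) (A : Matrix (Fin d) (Fin (n - d)) ℝ) :
    Set (Fin (n - 1) → ℝ) :=
  {y | ∃ x : Fin (d - 1) → ℝ, y = fun j : Fin (n - 1) =>
    if h : (j : ℕ) < d - 1 then x ⟨(j : ℕ), h⟩
    else ∑ i : Fin d, tildeVec d x i * A i ⟨(j : ℕ) - (d - 1), by have := j.isLt; omega⟩}

/-- `A ∈ W_r(ι, κ)`: there is `C > 0` such that `‖Aq + p‖ ≤ C‖q‖^{-r}` has
infinitely many integer solutions. -/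
def MemW (r : ℝ) {ι κ : Type*} [Fintype ι] [Fintype κ] (A : Matrix ι κ ℝ) : Prop :=
  ∃ C : ℝ, 0 < C ∧ {pq : (ι → ℤ) × (κ → ℤ) |
    ‖A.mulVec (fun j => ((pq.2 j : ℝ))) + (fun i => ((pq.1 i : ℝ)))‖
      ≤ C * ‖(fun j => ((pq.2 j : ℝ)) : κ → ℝ)‖ ^ (-r)}.Infinite

/-- `A ∈ W'_r(ι, κ)`: for every `C > 0` the inequality `‖Aq + p‖ ≤ C‖q‖^{-r}` has
a nonzero integer solution. -/
def MemW' (r : ℝ) {ι κ : Type*} [Fintype ι] [Fintype κ] (A : Matrix ι κ ℝ) : Prop :=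
  ∀ C : ℝ, 0 < C → ∃ pq : (ι → ℤ) × (κ → ℤ), pq ≠ 0 ∧
    ‖A.mulVec (fun j => ((pq.2 j : ℝ))) + (fun i => ((pq.1 i : ℝ)))‖
      ≤ C * ‖(fun j => ((pq.2 j : ℝ)) : κ → ℝ)‖ ^ (-r)

/-- `Γ = SL_n(ℤ)` as a subgroup of `SL_n(ℝ)`. -/
def Gamma (n : ℕ) : Subgroup (SLn n) :=
  (Matrix.SpecialLinearGroup.map (n := Fin n) (Int.castRingHom ℝ)).range

/-- The homogeneous space `X = SL_n(ℝ)/SL_n(ℤ)`. -/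
abbrev XSpace (n : ℕ) := SLn n ⧸ Gamma n

instance (n : ℕ) : MeasurableSpace (XSpace n) := borel _

/-- The column indices `1 ≤ i < j ≤ n-2` of the matrix `A^ext`. -/
abbrev PairIdx (n : ℕ) := {p : Fin (n - 2) × Fin (n - 2) // p.1 < p.2}

/-- The matrix `A^ext` associated to a `2 × (n-2)` matrix `A`. -/
def Aext (n : ℕ) (A : Matrix (Fin 2) (Fin (n - 2)) ℝ) :
    Matrix (Fin (n - 2) ⊕ (Fin (n - 2) ⊕ Unit)) (PairIdx n) ℝ :=
  Matrix.of fun row col =>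
    match row with
    | Sum.inl k =>
        if k = col.1.1 then -(A 0 col.1.2) else if k = col.1.2 then A 0 col.1.1 else 0
    | Sum.inr (Sum.inl k) =>
        if k = col.1.1 then -(A 1 col.1.2) else if k = col.1.2 then A 1 col.1.1 else 0
    | Sum.inr (Sum.inr _) => A 0 col.1.2 * A 1 col.1.1 - A 0 col.1.1 * A 1 col.1.2

/-- Inclusion of `SL_n(ℤ)` into `SL_n(ℝ)`. -/
def SLmapZ (n : ℕ) : Matrix.SpecialLinearGroup (Fin n) ℤ →* SLn n :=
  Matrix.SpecialLinearGroup.map (Int.castRingHom ℝ)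

/-- Index of the standard basis of `⋀^k ℝ^N`: subsets of `Fin N` of cardinality `k`. -/
abbrev WIdx (N k : ℕ) := {s : Finset (Fin N) // s.card = k}

/-- Identification of `ι → ℝ` with the Euclidean space indexed by `ι`. -/
def toEuc {ι : Type*} [Fintype ι] (f : ι → ℝ) : EuclideanSpace ℝ ι :=
  (WithLp.equiv 2 (ι → ℝ)).symm f

/-- The Plücker coordinates of the wedge `w₁ ∧ ⋯ ∧ w_k` of vectors in `ℝ^N`. -/
def wedgeCoords (N k : ℕ) (w : Fin k → (Fin N → ℝ)) : WIdx N k → ℝ :=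
  fun S => (Matrix.of fun a b : Fin k => w a ((S.1.orderIsoOfFin S.2 b : Fin N))).det

/-- The wedge `w₁ ∧ ⋯ ∧ w_k` as an element of the Euclidean space `⋀^k ℝ^N`. -/
def wedgeE (N k : ℕ) (w : Fin k → (Fin N → ℝ)) : EuclideanSpace ℝ (WIdx N k) :=
  toEuc (wedgeCoords N k w)

/-- The `k`-th compound matrix, giving the action of a matrix on `⋀^k ℝ^N`
in Plücker coordinates. -/
def compound (N k : ℕ) (M : Matrix (Fin N) (Fin N) ℝ) : Matrix (WIdx N k) (WIdx N k) ℝ :=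
  Matrix.of fun S T =>
    (Matrix.of fun a b : Fin k =>
      M ((S.1.orderIsoOfFin S.2 a : Fin N)) ((T.1.orderIsoOfFin T.2 b : Fin N))).det

/-- Action of `g ∈ SL_n(ℝ)` on `⋀^k ℝ^N` in Plücker coordinates. -/
def wedgeAction (N k : ℕ) (M : Matrix (Fin N) (Fin N) ℝ) (w : EuclideanSpace ℝ (WIdx N k)) :
    EuclideanSpace ℝ (WIdx N k) :=
  toEuc ((compound N k M).mulVec (WithLp.equiv 2 _ w))

/-- The parabolic subgroup `P_j ⊆ SL_n(ℝ)` (block lower triangular with an upper-left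
`j × j` block), as a set. -/
def Pblock (n j : ℕ) : Set (SLn n) :=
  {g | ∀ s t : Fin n, (s : ℕ) < j → j ≤ (t : ℕ) → (g : Matrix (Fin n) (Fin n) ℝ) s t = 0}

/-- A vector `y ∈ ℝ^{n-1}` is Dirichlet-improvable. -/
def DirichletImprovable (n : ℕ) (y : Fin (n - 1) → ℝ) : Prop :=
  ∃ δ : ℝ, 0 < δ ∧ δ < 1 ∧ ∃ T₀ : ℝ, ∀ T : ℝ, T₀ ≤ T →
    ∃ (p : Fin (n - 1) → ℤ) (q : ℤ), q ≠ 0 ∧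
      ‖(fun i => (q : ℝ) * y i + (p i : ℝ) : Fin (n - 1) → ℝ)‖ ≤ δ / T ∧
      |(q : ℝ)| ≤ T ^ (n - 1)

/-- Flattening of an `n × n` matrix into a vector in `ℝ^{n·n}`. -/
def flatten (n : ℕ) (M : Matrix (Fin n) (Fin n) ℝ) : Fin (n * n) → ℝ :=
  fun idx => M (finProdFinEquiv.symm idx).1 (finProdFinEquiv.symm idx).2

/-- The adjoint action `Ad(g) : x ↦ g x g⁻¹` of `g ∈ SL_n(ℝ)` written as an
`(n·n) × (n·n)` matrix in the flattened coordinates. -/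
def AdMatrix (n : ℕ) (g : SLn n) : Matrix (Fin (n * n)) (Fin (n * n)) ℝ :=
  Matrix.of fun r c =>
    (g : Matrix (Fin n) (Fin n) ℝ) (finProdFinEquiv.symm r).1 (finProdFinEquiv.symm c).1 *
    ((g⁻¹ : SLn n) : Matrix (Fin n) (Fin n) ℝ) (finProdFinEquiv.symm c).2 (finProdFinEquiv.symm r).2


/-!
Write `v = (p, q) ∈ ℤ^d × ℤ^{n-d}`. Then `b_{dt} g_A v = (e^{(n-d)t} (Aq + p), e^{-dt} q)`, so (2)
says `‖Aq + p‖ ≤ R e^{-(n-d+r)t}` and `‖q‖ ≤ R e^{(d-r)t}`; eliminating `t` through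
`‖q‖ ≈ e^{(d-r)t}` turns this into `‖Aq + p‖ ≤ R^{1+ρ} ‖q‖^{-ρ}` with `ρ = (n-d+r)/(d-r)`,
which is (1).
For (2) ⇔ (3) put `x = Aq + p`. As the first row of `ω` is `(w_ω, 0)`, the first coordinate of
`g_t ω g_A v` is `e^{(n-1)t} ⟪w_ω, x⟫` and the others are `e^{-t}` times coordinates of `ω g_A v`.
Compactness of `Ω` bounds `ω` uniformly, which gives (2) ⇒ (3); conversely, since the `w_ω` span
`ℝ^d`, the numbers `⟪w_ω, x⟫` control `‖x‖`, and one fixed `ω₀ ∈ Ω` controls `‖q‖ ≤ ‖g_A v‖`.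
The sequences are eliminated once and for all: each condition says that for every `ε > 0` there
are arbitrarily large `t` with a nonzero solution of the inequality with constant `ε`.
-/

open Real

section FrequentlySmall

variable {α β : Type*} [Zero α] [Zero β]

def FrequentlySmall (f : ℝ → α → ℝ) (w : ℝ → ℝ) : Prop :=
  ∀ ε > 0, ∃ᶠ t in atTop, ∃ v ≠ 0, f t v ≤ ε * w t

theorem exists_seq_iff_frequentlySmall (f : ℝ → α → ℝ) {w : ℝ → ℝ} (hw : ∀ t, 0 ≤ w t) :
    (∃ R : ℕ → ℝ, Tendsto R atTop (𝓝 0) ∧ ∃ t : ℕ → ℝ, Tendsto t atTop atTop ∧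
      ∃ v : ℕ → α, (∀ i, v i ≠ 0) ∧ ∀ i, f (t i) (v i) ≤ R i * w (t i)) ↔
      FrequentlySmall f w := by
  constructor
  · rintro ⟨R, hR, t, ht, v, hv, hle⟩ ε hε
    refine ht.frequently ((hR.eventually (gt_mem_nhds hε)).mono fun i hi => ?_).frequently
    exact ⟨v i, hv i, (hle i).trans (mul_le_mul_of_nonneg_right hi.le (hw _))⟩
  · intro h
    choose t ht v hv hle using fun i : ℕ => frequently_atTop.1 (h _ (Nat.one_div_pos_of_nat)) i
    exact ⟨_, tendsto_one_div_add_atTop_nhds_zero_nat, t,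
      tendsto_atTop_mono ht tendsto_natCast_atTop_atTop, v, hv, hle⟩

theorem FrequentlySmall.of_eventually_le {f g : ℝ → α → ℝ} {w u : ℝ → ℝ} {K : ℝ} (hK : 0 < K)
    (hfg : ∀ᶠ t in atTop, ∀ v ε, 0 < ε → f t v ≤ ε * w t → g t v ≤ K * ε * u t)
    (h : FrequentlySmall f w) : FrequentlySmall g u := by
  intro ε hε
  refine ((h (ε / K) (div_pos hε hK)).and_eventually hfg).mono ?_
  rintro t ⟨⟨v, hv, hle⟩, ht⟩
  refine ⟨v, hv, ?_⟩
  simpa [mul_div_cancel₀ ε hK.ne'] using ht v _ (div_pos hε hK) hle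

theorem frequentlySmall_congr_equiv (e : α ≃ β) (he : e 0 = 0) {f : ℝ → α → ℝ}
    {g : ℝ → β → ℝ} {w : ℝ → ℝ} (hfg : ∀ t v, f t v = g t (e v)) :
    FrequentlySmall f w ↔ FrequentlySmall g w := by
  have hne : ∀ v, e v ≠ 0 ↔ v ≠ 0 := fun v => by rw [← he, e.injective.ne_iff]
  refine forall₂_congr fun ε _ => frequently_congr (Eventually.of_forall fun t => ?_)
  refine ⟨fun ⟨v, hv, hle⟩ => ⟨e v, (hne v).2 hv, hfg t v ▸ hle⟩,
    fun ⟨x, hx, hle⟩ => ⟨e.symm x, ?_, ?_⟩⟩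
  · rwa [← hne, e.apply_symm_apply]
  · rwa [hfg, e.apply_symm_apply]

end FrequentlySmall

theorem le_mul_exp_sub_of_exp_mul_le {c y B e : ℝ} (h : exp c * y ≤ B * exp e) :
    y ≤ B * exp (e - c) := by
  rw [exp_sub, mul_div_assoc', le_div_iff₀ (exp_pos c)]
  linarith

theorem one_le_norm_intCast {ι : Type*} [Fintype ι] {v : ι → ℤ} (hv : v ≠ 0) :
    1 ≤ ‖fun i => (v i : ℝ)‖ := by
  obtain ⟨i, hi⟩ := Function.ne_iff.1 hv
  calc (1 : ℝ) ≤ |(v i : ℝ)| := by exact_mod_cast Int.one_le_abs hi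
    _ ≤ _ := norm_le_pi_norm (fun i => (v i : ℝ)) i

section Diophantine

variable {ι κ : Type*} [Fintype ι] [Fintype κ]

/-- The sup-norm of `diag(e^{a t} I, e^{-b t} I) (I A; 0 I) (p, q)`. -/
def blockOrbitNorm (A : Matrix ι κ ℝ) (a b t : ℝ) (pq : (ι → ℤ) × (κ → ℤ)) : ℝ :=
  max (exp (a * t) * ‖A *ᵥ (fun j => (pq.2 j : ℝ)) + fun i => (pq.1 i : ℝ)‖)
    (exp (-(b * t)) * ‖fun j => (pq.2 j : ℝ)‖)

variable {A : Matrix ι κ ℝ} {a b r : ℝ}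

theorem ne_zero_and_norm_le_of_blockOrbitNorm_le (hbr : r < b) (har : 0 ≤ a + r) {t ε : ℝ}
    (ht : 0 ≤ t) (hε : ε < 1) {pq : (ι → ℤ) × (κ → ℤ)} (hpq : pq ≠ 0)
    (h : blockOrbitNorm A a b t pq ≤ ε * exp (-(r * t))) :
    pq.2 ≠ 0 ∧ ‖A *ᵥ (fun j => (pq.2 j : ℝ)) + fun i => (pq.1 i : ℝ)‖ ≤
      ε ^ (1 + (a + r) / (b - r)) * ‖fun j => (pq.2 j : ℝ)‖ ^ (-((a + r) / (b - r))) := by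
  obtain ⟨p, q⟩ := pq
  set ρ := (a + r) / (b - r)
  have hρ : ρ * (b - r) = a + r := div_mul_cancel₀ _ (sub_pos.2 hbr).ne'
  rw [blockOrbitNorm, max_le_iff] at h
  have hx := le_mul_exp_sub_of_exp_mul_le h.1
  have hq := le_mul_exp_sub_of_exp_mul_le h.2
  rw [show -(r * t) - a * t = -((a + r) * t) by ring] at hx
  rw [show -(r * t) - -(b * t) = (b - r) * t by ring] at hq
  have hq0 : q ≠ 0 := by
    rintro rfl
    have hp : p ≠ 0 := fun hp => hpq (by rw [hp]; rfl)
    have hexp : exp (-((a + r) * t)) ≤ 1 := exp_le_one_iff.2 (by nlinarith)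
    have hε0 : 0 ≤ ε := (mul_nonneg_iff_of_pos_right (exp_pos _)).1 ((norm_nonneg _).trans hq)
    have hlt : ε * exp (-((a + r) * t)) < 1 := by nlinarith
    have : ‖fun i => (p i : ℝ)‖ < 1 := by simpa [← Pi.zero_def] using hx.trans_lt hlt
    exact this.not_ge (one_le_norm_intCast hp)
  refine ⟨hq0, ?_⟩
  set Q := ‖fun j => (q j : ℝ)‖
  have hQ : 1 ≤ Q := one_le_norm_intCast hq0
  have hε0 : 0 < ε := by
    by_contra! hε0
    nlinarith [exp_pos ((b - r) * t)]
  have hρ0 : 0 ≤ ρ := div_nonneg har (sub_pos.2 hbr).le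
  calc _ ≤ ε * exp (-((a + r) * t)) := hx
    _ = ε * exp (-((b - r) * t)) ^ ρ := by
      rw [← exp_mul]
      congr 2
      linear_combination t * hρ
    _ ≤ ε * (ε / Q) ^ ρ := by
      gcongr
      rw [Real.exp_neg, inv_le_iff_one_le_mul₀ (exp_pos _), div_mul_eq_mul_div,
        le_div_iff₀ (by positivity)]
      linarith
    _ = ε ^ (1 + ρ) * Q ^ (-ρ) := by
      rw [div_rpow hε0.le (by positivity), rpow_add hε0, rpow_one, rpow_neg (by positivity)]
      ring

theorem exists_blockOrbitNorm_le_of_norm_le (hbr : r < b) {ε : ℝ} (hε : 0 < ε)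
    {pq : (ι → ℤ) × (κ → ℤ)} (hq : pq.2 ≠ 0)
    (h : ‖A *ᵥ (fun j => (pq.2 j : ℝ)) + fun i => (pq.1 i : ℝ)‖ ≤
      ε ^ (1 + (a + r) / (b - r)) * ‖fun j => (pq.2 j : ℝ)‖ ^ (-((a + r) / (b - r)))) :
    ∃ t, -log ε / (b - r) ≤ t ∧ blockOrbitNorm A a b t pq ≤ ε * exp (-(r * t)) := by
  simp only [blockOrbitNorm, max_le_iff]
  set ρ := (a + r) / (b - r)
  have hbr' : 0 < b - r := sub_pos.2 hbr
  have hρ : ρ * (b - r) = a + r := div_mul_cancel₀ _ hbr'.ne'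
  set Q := ‖fun j => (pq.2 j : ℝ)‖
  have hQ : 0 < Q := one_pos.trans_le (one_le_norm_intCast hq)
  -- the time at which `e^{-bt} ‖q‖ = ε e^{-rt}`
  refine ⟨log (Q / ε) / (b - r), ?_, ?_⟩
  · rw [log_div hQ.ne' hε.ne']
    gcongr
    linarith [log_nonneg (one_le_norm_intCast hq)]
  set t := log (Q / ε) / (b - r)
  have hlogQ : log Q = log ε + (b - r) * t := by
    rw [mul_div_cancel₀ _ hbr'.ne', log_div hQ.ne' hε.ne']
    ring
  constructor
  · calc _ ≤ exp (a * t) * (ε ^ (1 + ρ) * Q ^ (-ρ)) := by gcongr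
      _ = ε * exp (-(r * t)) := by
        rw [rpow_def_of_pos hε, rpow_def_of_pos hQ, hlogQ]
        conv_rhs => rw [← exp_log hε]
        rw [← exp_add, ← exp_add, ← exp_add]
        congr 1
        linear_combination (-t) * hρ
  · have hQ' : Q = ε * exp ((b - r) * t) := by rw [← exp_log hQ, hlogQ, exp_add, exp_log hε]
    refine le_of_eq ?_
    rw [hQ', mul_left_comm, ← exp_add]
    congr 2
    ring

theorem memW'_iff_frequentlySmall (A : Matrix ι κ ℝ) (hbr : r < b) (har : 0 < a + r) :
    MemW' ((a + r) / (b - r)) A ↔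
      FrequentlySmall (blockOrbitNorm A a b) (fun t => exp (-(r * t))) := by
  set ρ := (a + r) / (b - r)
  have hbr' : 0 < b - r := sub_pos.2 hbr
  have hρ : 0 < ρ := div_pos har hbr'
  constructor
  · intro hW ε hε
    refine frequently_atTop.2 fun T => ?_
    -- shrinking `ε` to `ε'` forces the time produced below to exceed `T`
    set ε' := min ε (exp (-((b - r) * T)))
    have hε' : 0 < ε' := lt_min hε (exp_pos _)
    obtain ⟨pq, hpq, hle⟩ := hW (ε' ^ (1 + ρ)) (rpow_pos_of_pos hε' _)
    have hq : pq.2 ≠ 0 := by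
      intro hq
      rw [hq] at hle
      exact hpq (Prod.ext (funext (by
        simpa [← Pi.zero_def, zero_rpow (neg_ne_zero.2 hρ.ne'), funext_iff] using hle)) hq)
    obtain ⟨t, hTt, ht⟩ := exists_blockOrbitNorm_le_of_norm_le hbr hε' hq hle
    refine ⟨t, le_trans ?_ hTt, pq, hpq, ht.trans (by gcongr; exact min_le_left _ _)⟩
    have := (log_le_log hε' (min_le_right _ _)).trans (log_exp (-((b - r) * T))).le
    rw [le_div_iff₀ hbr']
    linarith
  · intro h C hC
    set ε := min (C ^ (1 + ρ)⁻¹) (1 / 2)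
    have hε : 0 < ε := lt_min (rpow_pos_of_pos hC _) one_half_pos
    obtain ⟨t, ⟨pq, hpq, hle⟩, ht⟩ := ((h ε hε).and_eventually (eventually_ge_atTop 0)).exists
    obtain ⟨-, hx⟩ := ne_zero_and_norm_le_of_blockOrbitNorm_le hbr har.le ht
      ((min_le_right _ _).trans_lt one_half_lt_one) hpq hle
    refine ⟨pq, hpq, hx.trans (mul_le_mul_of_nonneg_right ?_ (rpow_nonneg (norm_nonneg _) _))⟩
    calc ε ^ (1 + ρ) ≤ (C ^ (1 + ρ)⁻¹) ^ (1 + ρ) := by gcongr; exact min_le_left _ _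
      _ = C := rpow_inv_rpow hC.le (by positivity)

end Diophantine

theorem abs_dotProduct_le {ι : Type*} [Fintype ι] (w x : ι → ℝ) :
    |w ⬝ᵥ x| ≤ Fintype.card ι * ‖w‖ * ‖x‖ := by
  calc |w ⬝ᵥ x| ≤ ∑ i, |w i * x i| := Finset.abs_sum_le_sum_abs _ _
    _ ≤ ∑ _i : ι, ‖w‖ * ‖x‖ := by
      gcongr with i
      rw [abs_mul]
      exact mul_le_mul (norm_le_pi_norm w i) (norm_le_pi_norm x i) (abs_nonneg _) (norm_nonneg _)
    _ = _ := by simp [mul_assoc]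

theorem exists_norm_le_mul_of_span_eq_top {ι : Type*} [Fintype ι] {S : Set (ι → ℝ)}
    (hS : Submodule.span ℝ S = ⊤) :
    ∃ M > 0, ∀ x : ι → ℝ, ∀ B, 0 ≤ B → (∀ w ∈ S, |w ⬝ᵥ x| ≤ B) → ‖x‖ ≤ M * B := by
  obtain ⟨T, hTS, hTspan, hT⟩ := exists_linearIndependent ℝ S
  have : Fintype T := @Fintype.ofFinite _ hT.finite
  let Φ : (ι → ℝ) →ₗ[ℝ] (T → ℝ) := Matrix.mulVecLin (Matrix.of fun (w : T) => (w : ι → ℝ))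
  have hker : LinearMap.ker Φ = ⊥ := by
    refine (Submodule.eq_bot_iff _).2 fun x hx => ?_
    have hperp : ∀ w ∈ Submodule.span ℝ T, w ⬝ᵥ x = 0 := by
      intro w hw
      induction hw using Submodule.span_induction with
      | mem w hw => exact congrFun hx ⟨w, hw⟩
      | zero => exact zero_dotProduct x
      | add _ _ _ _ h₁ h₂ => rw [add_dotProduct, h₁, h₂, add_zero]
      | smul c _ _ h => rw [smul_dotProduct, h, smul_zero]
    exact dotProduct_self_eq_zero.1 (hperp x (by rw [hTspan, hS]; trivial))
  obtain ⟨K, hK0, hK⟩ := Φ.exists_antilipschitzWith hker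
  refine ⟨K, hK0, fun x B hB hx => ?_⟩
  calc ‖x‖ ≤ K * ‖Φ x‖ := by simpa using hK.le_mul_dist x 0
    _ ≤ K * B := by
      gcongr
      exact (pi_norm_le_iff_of_nonneg hB).2 fun w => hx w (hTS w.2)

theorem le_biSup_of_isCompact {X : Type*} [TopologicalSpace X] {Ω : Set X} (hΩ : IsCompact Ω)
    {f : X → ℝ} (hf : Continuous f) {x : X} (hx : x ∈ Ω) : f x ≤ ⨆ y ∈ Ω, f y := by
  obtain ⟨B, hB⟩ := hΩ.bddAbove_image hf.continuousOn
  refine le_ciSup_of_le ⟨max B 0, ?_⟩ x (ciSup_pos (f := fun _ : x ∈ Ω => f x) hx).ge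
  rintro _ ⟨y, rfl⟩
  exact Real.iSup_le (fun hy => le_max_of_le_left (hB (Set.mem_image_of_mem f hy)))
    (le_max_right _ _)

theorem exists_norm_le_mul_norm_mulVec {n : ℕ} (g : SLn n) :
    ∃ C > 0, ∀ u : Fin n → ℝ, ‖u‖ ≤ C * ‖(g : Matrix (Fin n) (Fin n) ℝ) *ᵥ u‖ := by
  have hinj : Function.Injective (g : Matrix (Fin n) (Fin n) ℝ).mulVec :=
    mulVec_injective_iff_isUnit.2 ((isUnit_iff_isUnit_det _).2 (by simp))
  obtain ⟨C, hC0, hC⟩ := (mulVecLin (g : Matrix (Fin n) (Fin n) ℝ)).exists_antilipschitzWith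
    (LinearMap.ker_eq_bot.2 hinj)
  exact ⟨C, hC0, fun u => by simpa using hC.le_mul_dist u 0⟩

theorem exists_norm_row_le_of_isCompact {n : ℕ} {Ω : Set (SLn n)} (hΩ : IsCompact Ω) :
    ∃ K, ∀ ω ∈ Ω, ∀ k, ‖(ω : Matrix (Fin n) (Fin n) ℝ) k‖ ≤ K := by
  obtain ⟨K, hK⟩ := hΩ.exists_bound_of_continuousOn (E := Fin n → Fin n → ℝ)
    (f := fun ω => (ω : Matrix (Fin n) (Fin n) ℝ)) continuous_induced_dom.continuousOn
  exact ⟨K, fun ω hω k => (norm_le_pi_norm _ k).trans (hK ω hω)⟩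

section Blocks

variable {n d : ℕ}

def finSplit (hdn : d ≤ n) : Fin d ⊕ Fin (n - d) ≃ Fin n :=
  finSumFinEquiv.trans (finCongr (Nat.add_sub_of_le hdn))

@[simp] theorem val_finSplit_inl (hdn : d ≤ n) (i : Fin d) :
    (finSplit hdn (.inl i) : ℕ) = i := rfl

@[simp] theorem val_finSplit_inr (hdn : d ≤ n) (j : Fin (n - d)) :
    (finSplit hdn (.inr j) : ℕ) = d + j := rfl

def splitVec (hdn : d ≤ n) {α : Type*} [PseudoEMetricSpace α] :
    (Fin n → α) ≃ᵢ (Fin d → α) × (Fin (n - d) → α) :=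
  (IsometryEquiv.piCongrLeft (Y := fun _ => α) (finSplit hdn)).symm.trans
    IsometryEquiv.sumArrowIsometryEquivProdArrow

@[simp] theorem splitVec_fst_apply (hdn : d ≤ n) {α : Type*} [PseudoEMetricSpace α]
    (u : Fin n → α) (i : Fin d) : (splitVec hdn u).1 i = u (finSplit hdn (.inl i)) := rfl

@[simp] theorem splitVec_snd_apply (hdn : d ≤ n) {α : Type*} [PseudoEMetricSpace α]
    (u : Fin n → α) (j : Fin (n - d)) : (splitVec hdn u).2 j = u (finSplit hdn (.inr j)) := rfl

theorem norm_eq_max_splitVec (hdn : d ≤ n) (u : Fin n → ℝ) :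
    ‖u‖ = max ‖(splitVec hdn u).1‖ ‖(splitVec hdn u).2‖ := by
  rw [← Prod.norm_def, ← dist_zero_right, ← dist_zero_right, ← (splitVec hdn).dist_eq u 0]
  rfl

theorem dotProduct_eq_splitVec (hdn : d ≤ n) (a b : Fin n → ℝ) :
    a ⬝ᵥ b =
      (splitVec hdn a).1 ⬝ᵥ (splitVec hdn b).1 + (splitVec hdn a).2 ⬝ᵥ (splitVec hdn b).2 := by
  simp only [dotProduct]
  rw [← (finSplit hdn).sum_comp, Fintype.sum_sum_type]
  rfl

theorem gA_submatrix_finSplit (hdn : d ≤ n) (A : Matrix (Fin d) (Fin (n - d)) ℝ) :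
    (gA n d A : Matrix (Fin n) (Fin n) ℝ).submatrix (finSplit hdn) (finSplit hdn) =
      Matrix.fromBlocks 1 A 0 1 := by
  ext (i | i) (j | j) <;> simp [gA, Matrix.one_apply, Fin.ext_iff, finSplit] <;> grind

theorem splitVec_gA_mulVec (hdn : d ≤ n) (A : Matrix (Fin d) (Fin (n - d)) ℝ) (v : Fin n → ℝ) :
    splitVec hdn ((gA n d A : Matrix (Fin n) (Fin n) ℝ) *ᵥ v) =
      (A *ᵥ (splitVec hdn v).2 + (splitVec hdn v).1, (splitVec hdn v).2) := by
  have h := congrArg (· *ᵥ (v ∘ finSplit hdn)) (gA_submatrix_finSplit hdn A)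
  simp only [submatrix_mulVec_equiv, fromBlocks_mulVec, Function.comp_assoc,
    Equiv.self_comp_symm, Function.comp_id] at h
  ext i
  · have hi := congrFun h (.inl i)
    simp only [Sum.elim_inl, one_mulVec, Pi.add_apply] at hi
    exact hi.trans (add_comm _ _)
  · simpa using congrFun h (.inr i)

theorem splitVec_btFlow_mulVec (hd : 0 < d) (hdn : d ≤ n) (t : ℝ) (u : Fin n → ℝ) :
    splitVec hdn ((btFlow n d hd hdn (d * t) : Matrix (Fin n) (Fin n) ℝ) *ᵥ u) =
      (exp (((n : ℝ) - d) * t) • (splitVec hdn u).1, exp (-(d * t)) • (splitVec hdn u).2) := by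
  have hexp : ((n : ℝ) - d) / d * (d * t) = ((n : ℝ) - d) * t := by field_simp
  ext i
  · simp [btFlow, mulVec_diagonal, hexp]
  · simp [btFlow, mulVec_diagonal]

theorem norm_btFlow_mulVec (hd : 0 < d) (hdn : d ≤ n) (t : ℝ) (u : Fin n → ℝ) :
    ‖(btFlow n d hd hdn (d * t) : Matrix (Fin n) (Fin n) ℝ) *ᵥ u‖ =
      max (exp (((n : ℝ) - d) * t) * ‖(splitVec hdn u).1‖)
        (exp (-(d * t)) * ‖(splitVec hdn u).2‖) := by
  rw [norm_eq_max_splitVec hdn, splitVec_btFlow_mulVec, norm_smul, norm_smul,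
    norm_of_nonneg (exp_pos _).le, norm_of_nonneg (exp_pos _).le]

theorem norm_btFlow_mul_gA_mulVec_eq_blockOrbitNorm (hd : 0 < d) (hdn : d ≤ n) (A : Matrix (Fin d) (Fin (n - d)) ℝ)
    (t : ℝ) (v : Fin n → ℤ) :
    ‖((btFlow n d hd hdn (d * t) * gA n d A : SLn n) : Matrix (Fin n) (Fin n) ℝ) *ᵥ
        (fun j => (v j : ℝ))‖ = blockOrbitNorm A ((n : ℝ) - d) d t (splitVec hdn v) := by
  rw [Matrix.SpecialLinearGroup.coe_mul, ← mulVec_mulVec, norm_btFlow_mulVec, splitVec_gA_mulVec]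
  rfl

theorem gtFlow_mulVec_apply (hn : 0 < n) (t : ℝ) (y : Fin n → ℝ) (k : Fin n) :
    ((gtFlow n hn t : Matrix (Fin n) (Fin n) ℝ) *ᵥ y) k =
      (if (k : ℕ) = 0 then exp (((n : ℝ) - 1) * t) else exp (-t)) * y k :=
  mulVec_diagonal _ _ _

theorem exp_neg_mul_norm_le_norm_gtFlow_mulVec (hn : 0 < n) {t : ℝ} (ht : 0 ≤ t)
    (y : Fin n → ℝ) : exp (-t) * ‖y‖ ≤ ‖(gtFlow n hn t : Matrix (Fin n) (Fin n) ℝ) *ᵥ y‖ := by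
  have h : ‖exp (-t) • y‖ ≤ ‖(gtFlow n hn t : Matrix (Fin n) (Fin n) ℝ) *ᵥ y‖ := by
    refine (pi_norm_le_iff_of_nonneg (norm_nonneg _)).2 fun k => le_trans ?_ (norm_le_pi_norm _ k)
    rw [Pi.smul_apply, norm_smul, gtFlow_mulVec_apply, norm_mul]
    gcongr
    split_ifs
    · rw [norm_of_nonneg (exp_pos _).le, norm_of_nonneg (exp_pos _).le]
      exact exp_le_exp.2 (by nlinarith [(Nat.cast_nonneg n : (0 : ℝ) ≤ n)])
    · rfl
  rwa [norm_smul, norm_of_nonneg (exp_pos _).le] at h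

end Blocks

section Orbits

variable {n d : ℕ} (hn : 0 < n) (hd : 0 < d) (hdn : d ≤ n) {A : Matrix (Fin d) (Fin (n - d)) ℝ}
  {Ω : Set (SLn n)} {r t ε : ℝ}

theorem mulVec_apply_eq_dotProduct_splitVec_fst {W : Matrix (Fin n) (Fin n) ℝ} {k : Fin n}
    (hW : ∀ j : Fin n, d ≤ (j : ℕ) → W k j = 0) (u : Fin n → ℝ) :
    (W *ᵥ u) k = (splitVec hdn (W k)).1 ⬝ᵥ (splitVec hdn u).1 := by
  have h2 : (splitVec hdn (W k)).2 = 0 := funext fun j => hW _ (by simp)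
  rw [mulVec, dotProduct_eq_splitVec hdn, h2, zero_dotProduct, add_zero]

theorem norm_gtFlow_mulVec_mulVec_le {W : Matrix (Fin n) (Fin n) ℝ}
    (hW : ∀ j : Fin n, d ≤ (j : ℕ) → W ⟨0, hn⟩ j = 0) {K : ℝ} (hK : ∀ k, ‖W k‖ ≤ K)
    (ht : 0 ≤ t) (hε : 0 ≤ ε) {u : Fin n → ℝ}
    (hu : ‖(btFlow n d hd hdn (d * t) : Matrix (Fin n) (Fin n) ℝ) *ᵥ u‖ ≤ ε * exp (-(r * t))) :
    ‖(gtFlow n hn t : Matrix (Fin n) (Fin n) ℝ) *ᵥ (W *ᵥ u)‖ ≤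
      n * K * ε * exp (((d : ℝ) - r - 1) * t) := by
  rw [norm_btFlow_mulVec, max_le_iff] at hu
  have hx := le_mul_exp_sub_of_exp_mul_le hu.1
  have hq := le_mul_exp_sub_of_exp_mul_le hu.2
  have hdn' : (d : ℝ) ≤ n := by exact_mod_cast hdn
  have hu' : ‖u‖ ≤ ε * exp (((d : ℝ) - r) * t) := by
    rw [norm_eq_max_splitVec hdn]
    refine max_le (hx.trans ?_) (hq.trans_eq (by ring_nf))
    gcongr
    nlinarith
  have hK0 : 0 ≤ K := (norm_nonneg _).trans (hK ⟨0, hn⟩)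
  refine (pi_norm_le_iff_of_nonneg (by positivity)).2 fun k => ?_
  rw [gtFlow_mulVec_apply, norm_mul, Real.norm_eq_abs ((W *ᵥ u) k)]
  split_ifs with hk
  · obtain rfl : k = ⟨0, hn⟩ := Fin.ext hk
    have hw : ‖(splitVec hdn (W ⟨0, hn⟩)).1‖ ≤ K :=
      ((norm_eq_max_splitVec hdn _).symm ▸ le_max_left _ _).trans (hK _)
    have hexp : exp (((n : ℝ) - 1) * t) * exp (-(r * t) - ((n : ℝ) - d) * t) =
        exp (((d : ℝ) - r - 1) * t) := by
      rw [← exp_add]; ring_nf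
    calc _ ≤ exp (((n : ℝ) - 1) * t) * (d * K * (ε * exp (-(r * t) - ((n : ℝ) - d) * t))) := by
          rw [norm_of_nonneg (exp_pos _).le, mulVec_apply_eq_dotProduct_splitVec_fst hdn hW]
          gcongr
          refine (abs_dotProduct_le _ _).trans ?_
          rw [Fintype.card_fin]
          gcongr
      _ = d * K * ε * exp (((d : ℝ) - r - 1) * t) := by linear_combination d * K * ε * hexp
      _ ≤ _ := by gcongr
  · have hexp : exp (-t) * exp (((d : ℝ) - r) * t) = exp (((d : ℝ) - r - 1) * t) := by
      rw [← exp_add]; ring_nf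
    calc _ ≤ exp (-t) * (n * K * (ε * exp (((d : ℝ) - r) * t))) := by
          rw [norm_of_nonneg (exp_pos _).le]
          gcongr
          refine (abs_dotProduct_le (W k) u).trans ?_
          rw [Fintype.card_fin]
          gcongr
          exact hK k
      _ = _ := by linear_combination n * K * ε * hexp

theorem exp_mul_norm_splitVec_fst_le
    (hΩrow : ∀ ω ∈ Ω, ∀ j : Fin n, d ≤ (j : ℕ) → (ω : Matrix (Fin n) (Fin n) ℝ) ⟨0, hn⟩ j = 0)
    {M : ℝ} (hM : ∀ x : Fin d → ℝ, ∀ B, 0 ≤ B → (∀ w ∈ {w : Fin d → ℝ | ∃ ω ∈ Ω, ∀ i,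
      w i = (ω : Matrix (Fin n) (Fin n) ℝ) ⟨0, hn⟩ (Fin.castLE hdn i)}, |w ⬝ᵥ x| ≤ B) →
        ‖x‖ ≤ M * B)
    (hε : 0 ≤ ε) {u : Fin n → ℝ}
    (h : ∀ ω ∈ Ω, ‖(gtFlow n hn t : Matrix (Fin n) (Fin n) ℝ) *ᵥ ((ω : Matrix _ _ ℝ) *ᵥ u)‖ ≤
      ε * exp (((d : ℝ) - r - 1) * t)) :
    exp (((n : ℝ) - d) * t) * ‖(splitVec hdn u).1‖ ≤ M * ε * exp (-(r * t)) := by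
  have hx : ‖(splitVec hdn u).1‖ ≤ M * (ε * exp (-(((n : ℝ) - d + r) * t))) := by
    refine hM _ _ (by positivity) ?_
    rintro w ⟨ω, hω, hw⟩
    obtain rfl : w = (splitVec hdn ((ω : Matrix (Fin n) (Fin n) ℝ) ⟨0, hn⟩)).1 := funext hw
    have h0 := (norm_le_pi_norm _ ⟨0, hn⟩).trans (h ω hω)
    rw [gtFlow_mulVec_apply, if_pos rfl, norm_mul, norm_of_nonneg (exp_pos _).le,
      mulVec_apply_eq_dotProduct_splitVec_fst hdn (hΩrow ω hω), Real.norm_eq_abs] at h0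
    refine (le_mul_exp_sub_of_exp_mul_le h0).trans_eq ?_
    ring_nf
  have hexp : exp (((n : ℝ) - d) * t) * exp (-(((n : ℝ) - d + r) * t)) = exp (-(r * t)) := by
    rw [← exp_add]; ring_nf
  calc _ ≤ exp (((n : ℝ) - d) * t) * (M * (ε * exp (-(((n : ℝ) - d + r) * t)))) := by gcongr
    _ = M * ε * exp (-(r * t)) := by linear_combination M * ε * hexp

theorem exists_biSup_norm_gtFlow_mul_mulVec_le (hΩc : IsCompact Ω)
    (hΩrow : ∀ ω ∈ Ω, ∀ j : Fin n, d ≤ (j : ℕ) → (ω : Matrix (Fin n) (Fin n) ℝ) ⟨0, hn⟩ j = 0) :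
    ∃ K > 0, ∀ t, 0 ≤ t → ∀ (u : Fin n → ℝ) ε, 0 < ε →
      ‖((btFlow n d hd hdn (d * t) * gA n d A : SLn n) : Matrix (Fin n) (Fin n) ℝ) *ᵥ u‖ ≤
        ε * exp (-(r * t)) →
      (⨆ ω ∈ Ω, ‖((gtFlow n hn t * ω * gA n d A : SLn n) : Matrix (Fin n) (Fin n) ℝ) *ᵥ u‖) ≤
        K * ε * exp (((d : ℝ) - r - 1) * t) := by
  obtain ⟨K, hK⟩ := exists_norm_row_le_of_isCompact hΩc
  refine ⟨n * max K 1, by positivity, fun t ht u ε hε hu => ?_⟩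
  simp only [Matrix.SpecialLinearGroup.coe_mul, ← mulVec_mulVec] at hu ⊢
  refine Real.iSup_le (fun ω => Real.iSup_le (fun hω => ?_) (by positivity)) (by positivity)
  exact norm_gtFlow_mulVec_mulVec_le hn hd hdn (hΩrow ω hω)
    (fun k => (hK ω hω k).trans (le_max_left _ _)) ht hε.le hu

theorem exists_norm_btFlow_mul_gA_mulVec_le (hΩc : IsCompact Ω) (hΩne : Ω.Nonempty)
    (hΩrow : ∀ ω ∈ Ω, ∀ j : Fin n, d ≤ (j : ℕ) → (ω : Matrix (Fin n) (Fin n) ℝ) ⟨0, hn⟩ j = 0)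
    (hΩspan : Submodule.span ℝ {w : Fin d → ℝ | ∃ ω ∈ Ω, ∀ i : Fin d,
      w i = (ω : Matrix (Fin n) (Fin n) ℝ) ⟨0, hn⟩ (Fin.castLE hdn i)} = ⊤) :
    ∃ K > 0, ∀ t, 0 ≤ t → ∀ (u : Fin n → ℝ) ε, 0 < ε →
      (⨆ ω ∈ Ω, ‖((gtFlow n hn t * ω * gA n d A : SLn n) : Matrix (Fin n) (Fin n) ℝ) *ᵥ u‖) ≤
        ε * exp (((d : ℝ) - r - 1) * t) →
      ‖((btFlow n d hd hdn (d * t) * gA n d A : SLn n) : Matrix (Fin n) (Fin n) ℝ) *ᵥ u‖ ≤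
        K * ε * exp (-(r * t)) := by
  obtain ⟨M, hM0, hM⟩ := exists_norm_le_mul_of_span_eq_top hΩspan
  obtain ⟨ω₀, hω₀⟩ := hΩne
  obtain ⟨C, hC0, hC⟩ := exists_norm_le_mul_norm_mulVec ω₀
  refine ⟨max M C, lt_max_of_lt_left hM0, fun t ht u ε hε h => ?_⟩
  simp only [Matrix.SpecialLinearGroup.coe_mul, ← mulVec_mulVec] at h ⊢
  set v := (gA n d A : Matrix (Fin n) (Fin n) ℝ) *ᵥ u
  have hΩ : ∀ ω ∈ Ω, ‖(gtFlow n hn t : Matrix (Fin n) (Fin n) ℝ) *ᵥ ((ω : Matrix _ _ ℝ) *ᵥ v)‖ ≤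
      ε * exp (((d : ℝ) - r - 1) * t) := fun ω hω =>
    (le_biSup_of_isCompact hΩc (continuous_const.matrix_mulVec
      (continuous_induced_dom.matrix_mulVec continuous_const)).norm hω).trans h
  rw [norm_btFlow_mulVec, max_le_iff]
  constructor
  · exact (exp_mul_norm_splitVec_fst_le hn hdn hΩrow hM hε.le hΩ).trans
      (by gcongr; exact le_max_left _ _)
  · have hv : ‖(ω₀ : Matrix (Fin n) (Fin n) ℝ) *ᵥ v‖ ≤ ε * exp (((d : ℝ) - r) * t) := by
      refine (le_mul_exp_sub_of_exp_mul_le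
        ((exp_neg_mul_norm_le_norm_gtFlow_mulVec hn ht _).trans (hΩ ω₀ hω₀))).trans_eq ?_
      ring_nf
    have hexp : exp (-(d * t)) * exp (((d : ℝ) - r) * t) = exp (-(r * t)) := by
      rw [← exp_add]; ring_nf
    calc _ ≤ exp (-(d * t)) * (C * (ε * exp (((d : ℝ) - r) * t))) := by
          gcongr
          have hq := (norm_eq_max_splitVec hdn v).symm ▸ le_max_right _ _
          exact hq.trans ((hC v).trans (by gcongr))
      _ = C * ε * exp (-(r * t)) := by linear_combination C * ε * hexp
      _ ≤ _ := by gcongr; exact le_max_right _ _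

end Orbits

/-- **Lemma (interpretation of `W'_{(n-d+r)/(d-r)}(d, n-d)`).** -/
theorem interpretation_of_W'
    (n d : ℕ) (hn : 3 ≤ n) (hd : 2 ≤ d) (hdn : d ≤ n - 1)
    (r : ℝ) (hr0 : 0 < r) (hrd : r < d)
    (A : Matrix (Fin d) (Fin (n - d)) ℝ)
    (Ω : Set (SLn n)) (hΩc : IsCompact Ω) (hΩne : Ω.Nonempty)
    (hΩrow : ∀ ω ∈ Ω, ∀ j : Fin n, d ≤ (j : ℕ) →
      (ω : Matrix (Fin n) (Fin n) ℝ) ⟨0, by omega⟩ j = 0)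
    (hΩspan : Submodule.span ℝ
      {w : Fin d → ℝ | ∃ ω ∈ Ω, ∀ i : Fin d,
        w i = (ω : Matrix (Fin n) (Fin n) ℝ) ⟨0, by omega⟩ (Fin.castLE (by omega) i)} = ⊤) :
    (MemW' (((n : ℝ) - d + r) / (d - r)) A ↔
      (∃ R : ℕ → ℝ, Tendsto R atTop (𝓝 0) ∧ ∃ t : ℕ → ℝ, Tendsto t atTop atTop ∧
        ∃ v : ℕ → (Fin n → ℤ), (∀ i, v i ≠ 0) ∧ ∀ i,
          ‖((btFlow n d (by omega) (by omega) (d * t i) * gA n d A : SLn n) :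
              Matrix (Fin n) (Fin n) ℝ).mulVec (fun j => ((v i j : ℝ)))‖
            ≤ R i * Real.exp (-(r * t i)))) ∧
    ((∃ R : ℕ → ℝ, Tendsto R atTop (𝓝 0) ∧ ∃ t : ℕ → ℝ, Tendsto t atTop atTop ∧
        ∃ v : ℕ → (Fin n → ℤ), (∀ i, v i ≠ 0) ∧ ∀ i,
          ‖((btFlow n d (by omega) (by omega) (d * t i) * gA n d A : SLn n) :
              Matrix (Fin n) (Fin n) ℝ).mulVec (fun j => ((v i j : ℝ)))‖
            ≤ R i * Real.exp (-(r * t i))) ↔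
      (∃ C : ℕ → ℝ, Tendsto C atTop (𝓝 0) ∧ ∃ t : ℕ → ℝ, Tendsto t atTop atTop ∧
        ∃ v : ℕ → (Fin n → ℤ), (∀ i, v i ≠ 0) ∧ ∀ i,
          (⨆ ω ∈ Ω, ‖((gtFlow n (by omega) (t i) * ω * gA n d A : SLn n) :
              Matrix (Fin n) (Fin n) ℝ).mulVec (fun j => ((v i j : ℝ)))‖)
            ≤ C i * Real.exp (((d : ℝ) - r - 1) * t i))) := by
  have hd0 : 0 < d := by omega
  have hdn' : d ≤ n := by omega
  have hn0 : 0 < n := by omega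
  have hseq₂ := exists_seq_iff_frequentlySmall (fun t (v : Fin n → ℤ) =>
    ‖((btFlow n d hd0 hdn' (d * t) * gA n d A : SLn n) : Matrix (Fin n) (Fin n) ℝ) *ᵥ
      fun j => (v j : ℝ)‖) (fun t => (exp_pos (-(r * t))).le)
  have hseq₃ := exists_seq_iff_frequentlySmall (fun t (v : Fin n → ℤ) =>
    ⨆ ω ∈ Ω, ‖((gtFlow n hn0 t * ω * gA n d A : SLn n) : Matrix (Fin n) (Fin n) ℝ) *ᵥ
      fun j => (v j : ℝ)‖) (fun t => (exp_pos (((d : ℝ) - r - 1) * t)).le)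
  have hnd : 0 < (n : ℝ) - d + r := by
    have : (d : ℝ) ≤ n := by exact_mod_cast hdn'
    linarith
  have h12 := (memW'_iff_frequentlySmall A hrd hnd).trans
    (frequentlySmall_congr_equiv (splitVec hdn').toEquiv rfl
      (norm_btFlow_mul_gA_mulVec_eq_blockOrbitNorm hd0 hdn' A)).symm
  obtain ⟨K₂₃, hK₂₃, h₂₃⟩ := exists_biSup_norm_gtFlow_mul_mulVec_le hn0 hd0 hdn' (A := A) (r := r)
    hΩc hΩrow
  obtain ⟨K₃₂, hK₃₂, h₃₂⟩ := exists_norm_btFlow_mul_gA_mulVec_le hn0 hd0 hdn' (A := A) (r := r)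
    hΩc hΩne hΩrow hΩspan
  refine ⟨h12.trans hseq₂.symm, hseq₂.trans (Iff.trans ⟨?_, ?_⟩ hseq₃.symm)⟩
  · exact FrequentlySmall.of_eventually_le hK₂₃
      ((eventually_ge_atTop 0).mono fun t ht v ε hε => h₂₃ t ht _ ε hε)
  · exact FrequentlySmall.of_eventually_le hK₃₂
      ((eventually_ge_atTop 0).mono fun t ht v ε hε => h₃₂ t ht _ ε hε)
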